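/- arXiv:2404.17456 — 4 statements merged into one kernel-verified Lean document; each statement's English description precedes it below -/
import Mathlib

section
/- Let θ > 0, let z ∈ ℝ be a constant input, let T ≥ 1, and let an integrate-and-fire neuron evolve by u(t) = v(t-1) + z, s(t) = 1 if u(t) ≥ θ and s(t) = 0 otherwise, and v(t) = u(t) - θ·s(t), for t = 1, …, T, from an initial membrane potential v(0). If the residual membrane potential satisfies 0 ≤ v(T) < θ, then the total spike count equals ∑_{t=1}^{T} s(t) = ⌊(z·T + v(0))/θ⌋, and moreover 0 ≤ ⌊(z·T + v(0))/θ⌋ ≤ T. -/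
/-! Reset by subtraction removes exactly `θ` per spike, so after `T` steps the potential is
`v T = v 0 + z T - θ N` with `N` the spike count. Hence `z T + v 0 = θ N + v T`, and the residual
condition `0 ≤ v T < θ` says that `N` is the quotient of the division of `z T + v 0` by `θ`. -/

open Finset

theorem Int.floor_div_eq_of_eq_mul_add {θ x r : ℝ} {k : ℤ} (hθ : 0 < θ) (hx : x = θ * k + r)
    (hr₀ : 0 ≤ r) (hrθ : r < θ) : ⌊x / θ⌋ = k := by
  rw [Int.floor_eq_iff, le_div_iff₀ hθ, div_lt_iff₀ hθ, hx]
  constructor <;> nlinarith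

theorem eq_add_sub_mul_sum_of_reset {θ z : ℝ} {s v : ℕ → ℝ}
    (hv : ∀ t, v (t + 1) = v t + z - θ * s (t + 1)) (n : ℕ) :
    v n = v 0 + n * z - θ * ∑ t ∈ Icc 1 n, s t := by
  induction n with
  | zero => simp
  | succ n ih =>
    rw [hv, ih, sum_Icc_succ_top (Nat.le_add_left 1 n)]
    push_cast
    ring

theorem if_neuron_spike_count_general (θ z : ℝ) (hθ : 0 < θ) (T : ℕ)
    (u s v : ℕ → ℝ)
    (hu : ∀ t : ℕ, 1 ≤ t → u t = v (t - 1) + z)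
    (hs : ∀ t : ℕ, 1 ≤ t → s t = if θ ≤ u t then 1 else 0)
    (hv : ∀ t : ℕ, 1 ≤ t → v t = u t - θ * s t)
    (hres : 0 ≤ v T ∧ v T < θ) :
    (∑ t ∈ Finset.Icc 1 T, s t) = ((⌊(z * T + v 0) / θ⌋ : ℤ) : ℝ) ∧
    0 ≤ ⌊(z * T + v 0) / θ⌋ ∧ ⌊(z * T + v 0) / θ⌋ ≤ (T : ℤ) := by
  set spikes := (Icc 1 T).filter (fun t => θ ≤ u t)
  have hcount : ∑ t ∈ Icc 1 T, s t = #spikes := by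
    rw [← sum_boole]
    exact sum_congr rfl fun t ht => hs t (mem_Icc.mp ht).1
  have hstep : ∀ t, v (t + 1) = v t + z - θ * s (t + 1) := fun t => by
    rw [hv _ t.succ_pos, hu _ t.succ_pos]; rfl
  have hfloor : ⌊(z * T + v 0) / θ⌋ = #spikes :=
    Int.floor_div_eq_of_eq_mul_add hθ
      (by rw [eq_add_sub_mul_sum_of_reset hstep T, hcount]; push_cast; ring) hres.1 hres.2
  have hle : #spikes ≤ T := (card_filter_le _ _).trans (Nat.card_Icc 1 T).le
  refine ⟨?_, ?_, ?_⟩ <;> rw [hfloor]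
  · exact_mod_cast hcount
  · exact Int.natCast_nonneg _
  · exact_mod_cast hle

/-- For an IF neuron with reset-by-subtraction, threshold `θ > 0`, constant per-step
input `z`, if the residual potential satisfies `0 ≤ v T < θ` then the total spike
count over `T` steps equals `⌊(z*T + v 0)/θ⌋`, which lies in `[0, T]`. -/
theorem if_neuron_spike_count (θ z : ℝ) (hθ : 0 < θ) (T : ℕ) (hT : 1 ≤ T)
    (u s v : ℕ → ℝ)
    (hu : ∀ t : ℕ, 1 ≤ t → u t = v (t - 1) + z)
    (hs : ∀ t : ℕ, 1 ≤ t → s t = if θ ≤ u t then 1 else 0)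
    (hv : ∀ t : ℕ, 1 ≤ t → v t = u t - θ * s t)
    (hres : 0 ≤ v T ∧ v T < θ) :
    (∑ t ∈ Finset.Icc 1 T, s t) = ((⌊(z * T + v 0) / θ⌋ : ℤ) : ℝ) ∧
    0 ≤ ⌊(z * T + v 0) / θ⌋ ∧ ⌊(z * T + v 0) / θ⌋ ≤ (T : ℤ) :=
  if_neuron_spike_count_general θ z hθ T u s v hu hs hv hres
end

section
/- Let θ > 0, let z ∈ ℝ, let T ≥ 1, and let an integrate-and-fire neuron with threshold θ, constant per-step input z, and initial potential v(0) = θ/2 evolve by u(t) = v(t-1) + z, s(t) = 1 if u(t) ≥ θ else 0, v(t) = u(t) - θ·s(t). If 0 ≤ v(T) < θ, then the average postsynaptic potential equals the quantization-clip-floor-shift activation of the source ANN with quantization step L = T and trained threshold λ = θ; that is, (θ/T)·∑_{t=1}^{T} s(t) = θ·clip((1/T)·⌊z·T/θ + 1/2⌋, 0, 1). In particular, under these conditions the conversion error between the ANN activation and the SNN average postsynaptic potential is exactly zero. -/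
/-! Unrolling the reset-by-subtraction dynamics gives `v T = θ/2 + T z - θ k`, where `k ≤ T` is
the number of spikes. The hypothesis `0 ≤ v T < θ` then says exactly that `k` is the floor of
`z T / θ + 1/2`, and since `0 ≤ k/T ≤ 1` the clip in the QCFS activation is inactive. -/

open Finset

theorem floor_div_add_half_eq_of_sub_mul_mem_Ico {θ x : ℝ} {k : ℤ} (hθ : 0 < θ)
    (h : θ / 2 + x - θ * k ∈ Set.Ico 0 θ) : ⌊x / θ + 1 / 2⌋ = k := by
  obtain ⟨h₀, h₁⟩ := h
  rw [Int.floor_eq_iff, div_add' _ _ _ hθ.ne', le_div_iff₀ hθ, div_lt_iff₀ hθ]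
  constructor <;> linarith

namespace IFNeuron

variable {θ z : ℝ} {u s v : ℕ → ℝ}

theorem potential_eq_sub_spikes (hu : ∀ t, 1 ≤ t → u t = v (t - 1) + z)
    (hv : ∀ t, 1 ≤ t → v t = u t - θ * s t) (n : ℕ) :
    v n = v 0 + n * z - θ * ∑ t ∈ Icc 1 n, s t := by
  induction n with
  | zero => simp
  | succ n ih =>
    have hn : 1 ≤ n + 1 := n.succ_pos
    rw [hv _ hn, hu _ hn, Nat.add_sub_cancel, sum_Icc_succ_top hn, ih]
    push_cast
    ring

theorem sum_spikes_eq_card (hs : ∀ t, 1 ≤ t → s t = if θ ≤ u t then 1 else 0) (n : ℕ) :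
    ∑ t ∈ Icc 1 n, s t = #{t ∈ Icc 1 n | θ ≤ u t} := by
  rw [← sum_boole]
  exact sum_congr rfl fun t ht => hs t (mem_Icc.mp ht).1

end IFNeuron

theorem if_neuron_matches_qcfs_general (θ z : ℝ) (T : ℕ)
    (u s v : ℕ → ℝ) (hv0 : v 0 = θ / 2)
    (hu : ∀ t : ℕ, 1 ≤ t → u t = v (t - 1) + z)
    (hs : ∀ t : ℕ, 1 ≤ t → s t = if θ ≤ u t then 1 else 0)
    (hv : ∀ t : ℕ, 1 ≤ t → v t = u t - θ * s t)
    (hres : 0 ≤ v T ∧ v T < θ) :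
    (θ / (T : ℝ)) * ∑ t ∈ Finset.Icc 1 T, s t =
      θ * min 1 (max 0 ((1 / (T : ℝ)) * ((⌊z * T / θ + 1 / 2⌋ : ℤ) : ℝ))) := by
  obtain ⟨hres₀, hres₁⟩ := hres
  set k := #{t ∈ Icc 1 T | θ ≤ u t}
  have hkT : k ≤ T := (card_filter_le _ _).trans (by simp)
  have hsum := IFNeuron.sum_spikes_eq_card hs T
  have hvT := IFNeuron.potential_eq_sub_spikes hu hv T
  rw [hsum, hv0] at hvT
  have hfloor : ⌊z * T / θ + 1 / 2⌋ = k :=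
    floor_div_add_half_eq_of_sub_mul_mem_Ico (hres₀.trans_lt hres₁)
      ⟨by push_cast; linarith, by push_cast; linarith⟩
  have hclip : (k : ℝ) / T ≤ 1 := div_le_one_of_le₀ (by exact_mod_cast hkT) T.cast_nonneg
  rw [hsum, hfloor, Int.cast_natCast, one_div_mul_eq_div, max_eq_right (by positivity),
    min_eq_right hclip]
  ring

/-- For an IF neuron with reset-by-subtraction, threshold `θ > 0`, constant per-step
input `z`, and initial potential `v 0 = θ/2`, if `0 ≤ v T < θ` then the average
postsynaptic potential equals the QCFS activation with `L = T` and `λ = θ`: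
`θ * clip((1/T) * ⌊z*T/θ + 1/2⌋, 0, 1)`; i.e. the conversion error is exactly zero. -/
theorem if_neuron_matches_qcfs (θ z : ℝ) (hθ : 0 < θ) (T : ℕ) (hT : 1 ≤ T)
    (u s v : ℕ → ℝ) (hv0 : v 0 = θ / 2)
    (hu : ∀ t : ℕ, 1 ≤ t → u t = v (t - 1) + z)
    (hs : ∀ t : ℕ, 1 ≤ t → s t = if θ ≤ u t then 1 else 0)
    (hv : ∀ t : ℕ, 1 ≤ t → v t = u t - θ * s t)
    (hres : 0 ≤ v T ∧ v T < θ) :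
    (θ / (T : ℝ)) * ∑ t ∈ Finset.Icc 1 T, s t =
      θ * min 1 (max 0 ((1 / (T : ℝ)) * ((⌊z * T / θ + 1 / 2⌋ : ℤ) : ℝ))) :=
  if_neuron_matches_qcfs_general θ z T u s v hv0 hu hs hv hres
end

section
/- Let λ > 0 and let T ≥ 1 be a natural number. If z is a random variable uniformly distributed on the interval [0, λ], then the expectation of the clip-floor-shift quantized activation equals λ/2; that is, ∫ λ·clip((1/T)·⌊z·T/λ + 1/2⌋, 0, 1) dμ(z) = λ/2, where μ is the uniform probability measure on [0, λ]. In particular this expectation does not depend on T. -/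
/-!
Write `F z = λ · q(zT/λ)` with `q y = clip(⌊y + 1/2⌋ / T, 0, 1)`. Off the countable set where
`zT/λ + 1/2` is an integer, `⌊y + 1/2⌋ + ⌊T - y + 1/2⌋ = T`, and since `clip(1 - x) = 1 - clip x`
this gives the reflection identity `F z + F (λ - z) = λ`. Integrating it over `[0, λ]` and using
the invariance of the integral under `z ↦ λ - z` yields `2 ∫ F = λ²`.
-/

open MeasureTheory Set

lemma Int.floor_intCast_sub_of_notMem_range {R : Type*} [Ring R] [LinearOrder R] [FloorRing R]
    [IsOrderedRing R] {a : R} (ha : a ∉ Set.range Int.cast) (m : ℤ) :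
    ⌊(m : R) - a⌋ = m - 1 - ⌊a⌋ := by
  rw [sub_eq_neg_add, Int.floor_add_intCast, Int.floor_neg,
    (Int.ceil_eq_floor_add_one_iff_notMem a).2 ha]
  ring

lemma min_one_max_zero_one_sub {R : Type*} [Ring R] [LinearOrder R] [IsOrderedRing R] (x : R) :
    min 1 (max 0 (1 - x)) = 1 - min 1 (max 0 x) := by
  rcases le_total x 0 with hx | hx
  · have h1x : 1 ≤ 1 - x := (le_sub_self_iff 1).2 hx
    rw [max_eq_right (zero_le_one.trans h1x), min_eq_left h1x, max_eq_left hx,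
      min_eq_right zero_le_one, sub_zero]
  rcases le_total x 1 with hx' | hx'
  · rw [max_eq_right (sub_nonneg.2 hx'), min_eq_right (sub_le_self 1 hx), max_eq_right hx,
      min_eq_right hx']
  · rw [max_eq_left (sub_nonpos.2 hx'), min_eq_right zero_le_one, max_eq_right hx,
      min_eq_left hx', sub_self]

/-- `f_{T,λ} z = λ * qcfs T (z * T / λ)`. -/
noncomputable def qcfs (T : ℕ) (y : ℝ) : ℝ :=
  min 1 (max 0 ((1 / (T : ℝ)) * ((⌊y + 1 / 2⌋ : ℤ) : ℝ)))

lemma measurable_qcfs (T : ℕ) : Measurable (qcfs T) :=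
  measurable_const.min <| measurable_const.max <| measurable_const.mul <|
    measurable_from_top.comp ((measurable_id.add_const _).floor)

lemma qcfs_nonneg (T : ℕ) (y : ℝ) : 0 ≤ qcfs T y :=
  le_min zero_le_one (le_max_left _ _)

lemma qcfs_le_one (T : ℕ) (y : ℝ) : qcfs T y ≤ 1 :=
  min_le_left _ _

lemma qcfs_add_qcfs_sub {T : ℕ} (hT : T ≠ 0) {y : ℝ} (hy : y + 1 / 2 ∉ range Int.cast) :
    qcfs T y + qcfs T (T - y) = 1 := by
  have hfloor : ⌊(T : ℝ) - y + 1 / 2⌋ = T - ⌊y + 1 / 2⌋ := by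
    have := Int.floor_intCast_sub_of_notMem_range hy (T + 1)
    push_cast at this
    rw [show (T : ℝ) - y + 1 / 2 = T + 1 - (y + 1 / 2) by ring, this]
    ring
  have hTR : (T : ℝ) ≠ 0 := Nat.cast_ne_zero.2 hT
  have hscaled : 1 / (T : ℝ) * ((T - ⌊y + 1 / 2⌋ : ℤ) : ℝ) = 1 - 1 / T * ⌊y + 1 / 2⌋ := by
    push_cast
    field_simp
  rw [qcfs, qcfs, hfloor, hscaled, min_one_max_zero_one_sub]
  ring

lemma countable_setOf_affine_mem_range_intCast {a : ℝ} (ha : a ≠ 0) (b : ℝ) :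
    {x : ℝ | a * x + b ∈ range Int.cast}.Countable :=
  (countable_range Int.cast).preimage fun _ _ h ↦ mul_left_cancel₀ ha (add_right_cancel h)

lemma intervalIntegral.integral_eq_of_add_comp_sub_ae {f : ℝ → ℝ} {a b c : ℝ}
    (hf : IntervalIntegrable f volume a b)
    (hsym : ∀ᵐ x, x ∈ uIoc a b → f x + f (a + b - x) = c) :
    ∫ x in a..b, f x = (b - a) * c / 2 := by
  have hreflect : ∫ x in a..b, f (a + b - x) = ∫ x in a..b, f x := by
    rw [intervalIntegral.integral_comp_sub_left f (a + b), add_sub_cancel_right,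
      add_sub_cancel_left]
  have hreflect_int : IntervalIntegrable (fun x ↦ f (a + b - x)) volume a b := by
    simpa using (hf.comp_sub_left (a + b)).symm
  have hsum : ∫ x in a..b, (f x + f (a + b - x)) = (b - a) * c := by
    rw [intervalIntegral.integral_congr_ae hsym, intervalIntegral.integral_const, smul_eq_mul]
  rw [intervalIntegral.integral_add hf hreflect_int, hreflect] at hsum
  linarith

/-- For `z` uniform on `[0, λ]`, the expectation of the clip-floor-shift quantized
activation `λ * clip((1/T) * ⌊z*T/λ + 1/2⌋, 0, 1)` equals `λ/2`, independently of `T`. -/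
theorem qcfs_expectation_eq_half (lam : ℝ) (hlam : 0 < lam) (T : ℕ) (hT : 1 ≤ T) :
    ∫ z, lam * min 1 (max 0 ((1 / (T : ℝ)) * ((⌊z * T / lam + 1 / 2⌋ : ℤ) : ℝ)))
      ∂((ENNReal.ofReal lam)⁻¹ • volume.restrict (Set.Icc (0 : ℝ) lam)) = lam / 2 := by
  set F : ℝ → ℝ := fun z ↦ lam * qcfs T (z * T / lam)
  have hT0 : T ≠ 0 := Nat.one_le_iff_ne_zero.1 hT
  have hF_int : IntervalIntegrable F volume 0 lam := by
    refine (intervalIntegrable_const (c := lam)).mono_fun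
      ((measurable_const.mul ((measurable_qcfs T).comp (by fun_prop))).aestronglyMeasurable) ?_
    refine ae_of_all _ fun z ↦ ?_
    simp only [Real.norm_eq_abs, abs_of_pos hlam, F, abs_mul]
    rw [abs_of_nonneg (qcfs_nonneg T _)]
    exact mul_le_of_le_one_right hlam.le (qcfs_le_one T _)
  have hF_reflect : ∀ᵐ z, z ∈ uIoc 0 lam → F z + F (0 + lam - z) = lam := by
    have hcount := countable_setOf_affine_mem_range_intCast
      (div_ne_zero (Nat.cast_ne_zero.2 hT0) hlam.ne') (1 / 2)
    filter_upwards [hcount.ae_notMem volume] with z hz _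
    have hy : z * T / lam + 1 / 2 ∉ range Int.cast := by
      rwa [div_mul_eq_mul_div, mul_comm (T : ℝ)] at hz
    have hrefl : (0 + lam - z) * T / lam = T - z * T / lam := by field_simp; ring
    simp only [F, hrefl, ← mul_add, qcfs_add_qcfs_sub hT0 hy, mul_one]
  have hF : ∫ z in (0 : ℝ)..lam, F z = lam * lam / 2 := by
    rw [intervalIntegral.integral_eq_of_add_comp_sub_ae hF_int hF_reflect, sub_zero]
  change ∫ z, F z ∂((ENNReal.ofReal lam)⁻¹ • volume.restrict (Icc 0 lam)) = lam / 2
  rw [integral_smul_measure, integral_Icc_eq_integral_Ioc, ← intervalIntegral.integral_of_le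
    hlam.le, hF, ENNReal.toReal_inv, ENNReal.toReal_ofReal hlam.le, smul_eq_mul]
  field_simp
end

section
/- (Theorem 1, single-neuron form.) Let θ > 0, let T ≥ 1 and L ≥ 1 be natural numbers, and let δ ∈ ℝ. For each real input z, let an integrate-and-fire neuron with threshold θ, constant per-step input z, and initial membrane potential v_z(0) = θ/2 evolve for t = 1, …, T by u_z(t) = v_z(t-1) + z, s_z(t) = 1 if u_z(t) ≥ θ else 0, and v_z(t) = u_z(t) - θ·s_z(t), and let φ_z(T) = (θ/T)·∑_{t=1}^{T} s_z(t) be its average postsynaptic potential. Assume that for every z ∈ [0, θ] the residual membrane potential satisfies 0 ≤ v_z(T) < θ. Let μ be the uniform probability measure on [0, θ] and γ the standard Gaussian measure on ℝ. Then the conversion error ε(z, g) = φ_z(T) - (θ·clip((1/L)·⌊z·L/θ + 1/2⌋, 0, 1) + δ·g) between the converted SNN and the source ANN with Noisy Quantized activation has zero expectation: ∫ ε d(μ ⊗ γ) = 0, for every T, L, and δ. -/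
/-!
With `v 0 = θ / 2` the membrane potential telescopes to `v T = θ / 2 + T z - θ k`, where `k` is
the spike count, so the residual bound `0 ≤ v T < θ` forces `k = round (T z / θ)`: the SNN output
is the rounding quantizer `θ / T * round (T z / θ)`, and on `[0, θ]` the clipped noise-free part of
the NQ activation is the same quantizer with `L` levels. Off a countable set every such quantizer
`Q` satisfies `Q z + Q (θ - z) = θ`, so its mean under the uniform law is `θ / 2` whatever the
number of levels, while the Gaussian noise has mean zero.
-/

open MeasureTheory ProbabilityTheory

section Round

variable {α : Type*} [Field α] [LinearOrder α] [IsStrictOrderedRing α] [FloorRing α]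

lemma round_monotone : Monotone (round : α → ℤ) := fun a b hab => by
  simpa only [round_eq] using Int.floor_mono (add_le_add_left hab _)

lemma round_neg_of_ne_add_half {x : α} (hx : ∀ k : ℤ, x ≠ k + 1 / 2) :
    round (-x) = -round x := by
  have hr := round_eq_iff.mp (rfl : round x = _)
  have hlow : (round x - 1 / 2 : α) ≠ x := fun h => hx (round x - 1) (by push_cast; linarith)
  rw [round_eq_iff, Set.mem_Ico]
  push_cast
  constructor <;> linarith [lt_of_le_of_ne hr.1 hlow, hr.2]

lemma round_intCast_sub_of_ne_add_half (m : ℤ) {x : α} (hx : ∀ k : ℤ, x ≠ k + 1 / 2) :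
    round ((m : α) - x) = m - round x := by
  rw [sub_eq_add_neg, round_intCast_add, round_neg_of_ne_add_half hx, sub_eq_add_neg]

lemma round_div_eq_of_residual {θ x : α} (hθ : 0 < θ) {k : ℤ} (h0 : 0 ≤ θ / 2 + x - θ * k)
    (h1 : θ / 2 + x - θ * k < θ) : round (x / θ) = k := by
  rw [round_eq_iff, Set.mem_Ico, le_div_iff₀ hθ, div_lt_iff₀ hθ]
  constructor <;> linarith

end Round

theorem intervalIntegral_eq_of_ae_add_reflect {f : ℝ → ℝ} {a c : ℝ}
    (hf : IntervalIntegrable f volume 0 a) (h : ∀ᵐ x, f x + f (a - x) = c) :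
    ∫ x in (0 : ℝ)..a, f x = a * c / 2 := by
  have hrefl : ∫ x in (0 : ℝ)..a, f (a - x) = ∫ x in (0 : ℝ)..a, f x := by
    simp [intervalIntegral.integral_comp_sub_left f a]
  have hsum : ∫ x in (0 : ℝ)..a, (f x + f (a - x)) = a * c := by
    rw [intervalIntegral.integral_congr_ae (h.mono fun x hx _ => hx)]
    simp
  rw [intervalIntegral.integral_add hf (by simpa using (hf.comp_sub_left a).symm), hrefl] at hsum
  linarith

theorem integral_uniform_Icc {θ : ℝ} (hθ : 0 ≤ θ) (f : ℝ → ℝ) :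
    ∫ z, f z ∂((ENNReal.ofReal θ)⁻¹ • volume.restrict (Set.Icc 0 θ)) =
      θ⁻¹ * ∫ z in (0 : ℝ)..θ, f z := by
  rw [integral_smul_measure, integral_Icc_eq_integral_Ioc, ← intervalIntegral.integral_of_le hθ,
    ENNReal.toReal_inv, ENNReal.toReal_ofReal hθ, smul_eq_mul]

lemma isProbabilityMeasure_uniform_Icc {θ : ℝ} (hθ : 0 < θ) :
    IsProbabilityMeasure ((ENNReal.ofReal θ)⁻¹ • volume.restrict (Set.Icc (0 : ℝ) θ)) := by
  have h := cond_isProbabilityMeasure_of_finite (μ := volume) (s := Set.Icc (0 : ℝ) θ)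
    (by simp [hθ]) (by simp)
  rwa [ProbabilityTheory.cond, Real.volume_Icc, sub_zero] at h

noncomputable def roundQuantize (θ : ℝ) (n : ℕ) (z : ℝ) : ℝ := θ / n * round (n * z / θ)

section roundQuantize

variable {θ : ℝ} {n : ℕ}

lemma roundQuantize_monotone (hθ : 0 < θ) : Monotone (roundQuantize θ n) := by
  intro a b hab
  unfold roundQuantize
  gcongr
  exact round_monotone (by gcongr)

lemma roundQuantize_add_reflect (hθ : 0 < θ) (hn : 1 ≤ n) :
    ∀ᵐ z, roundQuantize θ n z + roundQuantize θ n (θ - z) = θ := by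
  have hn0 : (n : ℝ) ≠ 0 := by positivity
  have hbad : {z : ℝ | ∃ k : ℤ, n * z / θ = k + 1 / 2}.Countable :=
    (Set.countable_range fun k : ℤ => (k + 1 / 2) * θ / n).mono <| by
      rintro z ⟨k, hk⟩
      exact ⟨k, by field_simp at hk ⊢; linarith⟩
  filter_upwards [measure_eq_zero_iff_ae_notMem.mp (hbad.measure_zero volume)] with z hz
  push Not at hz
  have hsub : (n : ℝ) * (θ - z) / θ = ((n : ℤ) : ℝ) - n * z / θ := by field_simp; push_cast; ring
  simp only [roundQuantize, hsub, round_intCast_sub_of_ne_add_half _ hz]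
  push_cast
  field_simp
  ring

lemma intervalIntegral_roundQuantize (hθ : 0 < θ) (hn : 1 ≤ n) :
    ∫ z in (0 : ℝ)..θ, roundQuantize θ n z = θ * θ / 2 :=
  intervalIntegral_eq_of_ae_add_reflect (roundQuantize_monotone hθ).intervalIntegrable
    (roundQuantize_add_reflect hθ hn)

lemma integrable_roundQuantize_uniform (hθ : 0 < θ) :
    Integrable (roundQuantize θ n) ((ENNReal.ofReal θ)⁻¹ • volume.restrict (Set.Icc 0 θ)) := by
  have h : IntegrableOn (roundQuantize θ n) (Set.Icc 0 θ) := by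
    rw [← intervalIntegrable_iff_integrableOn_Icc_of_le hθ.le]
    exact (roundQuantize_monotone hθ).intervalIntegrable
  exact h.smul_measure (by simp [hθ])

lemma integral_roundQuantize_uniform (hθ : 0 < θ) (hn : 1 ≤ n) :
    ∫ z, roundQuantize θ n z ∂((ENNReal.ofReal θ)⁻¹ • volume.restrict (Set.Icc 0 θ)) = θ / 2 := by
  rw [integral_uniform_Icc hθ.le, intervalIntegral_roundQuantize hθ hn]
  field_simp

lemma mul_clip_floor_eq_roundQuantize (hθ : 0 < θ) (hn : 1 ≤ n) {z : ℝ} (hz : z ∈ Set.Icc 0 θ) :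
    θ * min 1 (max 0 ((1 / (n : ℝ)) * ((⌊z * n / θ + 1 / 2⌋ : ℤ) : ℝ))) = roundQuantize θ n z := by
  have hn0 : (0 : ℝ) < n := by exact_mod_cast hn
  have hfloor : ⌊z * n / θ + 1 / 2⌋ = round (n * z / θ) := by rw [round_eq, mul_comm z]
  have hlo : (0 : ℝ) ≤ round (n * z / θ) := by
    have := round_monotone (show (0 : ℝ) ≤ n * z / θ by have := hz.1; positivity)
    rw [round_zero] at this
    exact_mod_cast this
  have hhi : (round (n * z / θ) : ℝ) ≤ n := by
    have := round_monotone (show n * z / θ ≤ n by rw [div_le_iff₀ hθ]; nlinarith [hz.2])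
    rw [round_natCast] at this
    exact_mod_cast this
  have hq0 : 0 ≤ (1 / (n : ℝ)) * round (n * z / θ) := by positivity
  have hq1 : (1 / (n : ℝ)) * round (n * z / θ) ≤ 1 := by
    rw [one_div_mul_eq_div, div_le_one hn0]; exact hhi
  rw [hfloor, max_eq_right hq0, min_eq_right hq1, roundQuantize]
  ring

end roundQuantize

section IntegrateAndFire

variable {θ z : ℝ} {u s v : ℕ → ℝ}

lemma potential_eq_sub_spikes (hu : ∀ t, 1 ≤ t → u t = v (t - 1) + z)
    (hv : ∀ t, 1 ≤ t → v t = u t - θ * s t) (n : ℕ) :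
    v n = v 0 + n * z - θ * ∑ t ∈ Finset.Icc 1 n, s t := by
  induction n with
  | zero => simp
  | succ k ih =>
    rw [Finset.sum_Icc_succ_top (by omega), hv _ (by omega), hu _ (by omega),
      Nat.add_sub_cancel, ih]
    push_cast
    ring

lemma spike_sum_eq_card (hs : ∀ t, 1 ≤ t → s t = if θ ≤ u t then 1 else 0) (n : ℕ) :
    ∑ t ∈ Finset.Icc 1 n, s t = (Finset.Icc 1 n |>.filter fun t => θ ≤ u t).card := by
  rw [← Finset.sum_boole]
  exact Finset.sum_congr rfl fun t ht => hs t (Finset.mem_Icc.mp ht).1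

lemma spike_rate_eq_roundQuantize (hθ : 0 < θ) {n : ℕ} (hv0 : v 0 = θ / 2)
    (hu : ∀ t, 1 ≤ t → u t = v (t - 1) + z)
    (hs : ∀ t, 1 ≤ t → s t = if θ ≤ u t then 1 else 0)
    (hv : ∀ t, 1 ≤ t → v t = u t - θ * s t) (hres : 0 ≤ v n ∧ v n < θ) :
    θ / n * ∑ t ∈ Finset.Icc 1 n, s t = roundQuantize θ n z := by
  rw [potential_eq_sub_spikes hu hv, hv0, spike_sum_eq_card hs] at hres
  rw [roundQuantize, spike_sum_eq_card hs,
    round_div_eq_of_residual hθ (k := (Finset.card _ : ℕ)) (by simpa using hres.1)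
      (by simpa using hres.2)]
  simp

end IntegrateAndFire

/-- Theorem 1 (single-neuron form). For each input `z`, an IF neuron with threshold
`θ > 0`, constant per-step input `z`, and initial potential `θ/2` evolves by charging,
Heaviside firing, and reset-by-subtraction. If the residual potential satisfies
`0 ≤ v_z T < θ` for every `z ∈ [0, θ]`, then the conversion error between the SNN
average postsynaptic potential and the source ANN's Noisy Quantized activation has
zero expectation under (uniform on `[0, θ]`) ⊗ (standard Gaussian). -/
theorem nq_conversion_error_zero_expectation (θ : ℝ) (hθ : 0 < θ)
    (T L : ℕ) (hT : 1 ≤ T) (hL : 1 ≤ L) (δ : ℝ)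
    (u s v : ℝ → ℕ → ℝ)
    (hv0 : ∀ z : ℝ, v z 0 = θ / 2)
    (hu : ∀ z : ℝ, ∀ t : ℕ, 1 ≤ t → u z t = v z (t - 1) + z)
    (hs : ∀ z : ℝ, ∀ t : ℕ, 1 ≤ t → s z t = if θ ≤ u z t then 1 else 0)
    (hv : ∀ z : ℝ, ∀ t : ℕ, 1 ≤ t → v z t = u z t - θ * s z t)
    (hres : ∀ z ∈ Set.Icc (0 : ℝ) θ, 0 ≤ v z T ∧ v z T < θ) :
    ∫ p : ℝ × ℝ,
        ((θ / (T : ℝ)) * (∑ t ∈ Finset.Icc 1 T, s p.1 t)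
          - (θ * min 1 (max 0 ((1 / (L : ℝ)) * ((⌊p.1 * L / θ + 1 / 2⌋ : ℤ) : ℝ)))
              + δ * p.2))
      ∂(((ENNReal.ofReal θ)⁻¹ • volume.restrict (Set.Icc (0 : ℝ) θ)).prod
          (gaussianReal 0 1)) = 0 := by
  set μ := (ENNReal.ofReal θ)⁻¹ • volume.restrict (Set.Icc (0 : ℝ) θ)
  have : IsProbabilityMeasure μ := isProbabilityMeasure_uniform_Icc hθ
  have hmem : ∀ᵐ p ∂μ.prod (gaussianReal 0 1), p.1 ∈ Set.Icc 0 θ :=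
    Measure.quasiMeasurePreserving_fst.ae <|
      Measure.ae_smul_measure (ae_restrict_mem measurableSet_Icc) _
  have hae : ∀ᵐ p ∂μ.prod (gaussianReal 0 1),
      (θ / (T : ℝ)) * (∑ t ∈ Finset.Icc 1 T, s p.1 t)
          - (θ * min 1 (max 0 ((1 / (L : ℝ)) * ((⌊p.1 * L / θ + 1 / 2⌋ : ℤ) : ℝ))) + δ * p.2)
        = roundQuantize θ T p.1 - roundQuantize θ L p.1 - δ * p.2 := by
    filter_upwards [hmem] with p hp
    rw [spike_rate_eq_roundQuantize hθ (hv0 p.1) (hu p.1) (hs p.1) (hv p.1) (hres p.1 hp),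
      mul_clip_floor_eq_roundQuantize hθ hL hp]
    ring
  have hgauss : Integrable (fun x => δ * x) (gaussianReal 0 1) :=
    ((memLp_id_gaussianReal 1).integrable le_rfl).const_mul δ
  have hQ (n : ℕ) :
      Integrable (fun p : ℝ × ℝ => roundQuantize θ n p.1) (μ.prod (gaussianReal 0 1)) :=
    (integrable_roundQuantize_uniform hθ).comp_fst _
  rw [integral_congr_ae hae, integral_sub (by exact (hQ T).sub (hQ L)) (hgauss.comp_snd μ),
    integral_sub (hQ T) (hQ L), integral_fun_fst, integral_fun_fst, integral_fun_snd,
    integral_const_mul, integral_id_gaussianReal, integral_roundQuantize_uniform hθ hT,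
    integral_roundQuantize_uniform hθ hL]
  simp
end
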